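/- For each c ∈ (0,1), the two attractors T(c) = A(c,P₁) for P₁ ∈ 𝒫₄ and O(c) = A(c,P₂) for P₂ ∈ 𝒫₆∖𝒫₄ are distinct: the point v₁/(1-c) belongs to T(c) but not to O(c). Moreover A(c,P) depends only on whether P ∈ 𝒫₄ or P ∈ 𝒫₆∖𝒫₄, so the set {A(c,P) : P ∈ 𝒫₆} has exactly 2 elements. -/

import Mathlib

/- STATEMENT 13: For each c ∈ (0,1), if T(c) is the attractor for P₁ ∈ 𝒫₄ and O(c) is the
attractor for P₂ ∈ 𝒫₆∖𝒫₄, then v₁/(1-c) ∈ T(c), v₁/(1-c) ∉ O(c), hence T(c) ≠ O(c);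
moreover the set {A(c,P) : P ∈ 𝒫₆} has exactly 2 elements. -/
noncomputable section
open Matrix

abbrev E3 := EuclideanSpace ℝ (Fin 3)

def vtx : Fin 4 → E3 :=
  ![!₂[1, -1, 1], !₂[-1, 1, 1], !₂[-1, -1, -1], !₂[1, 1, -1]]

/-- The other four vertices of the cube `[-1,1]³`. -/
def vtx' : Fin 4 → E3 :=
  ![!₂[1, 1, 1], !₂[-1, -1, 1], !₂[1, -1, -1], !₂[-1, 1, -1]]

/-- The cube `C₀ = [-1,1]³`. -/
def C0 : Set E3 := {x | ∀ i, x i ∈ Set.Icc (-1 : ℝ) 1}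

/-- The regular tetrahedron `T₀` with vertices `v₁, v₂, v₃, v₄`. -/
def T0 : Set E3 := convexHull ℝ (Set.range vtx)

/-- Membership in the hexahedral group `𝒫₆`: rotations preserving the cube `C₀`. -/
def memP6 (Q : Matrix (Fin 3) (Fin 3) ℝ) : Prop :=
  Q ∈ Matrix.specialOrthogonalGroup (Fin 3) ℝ ∧ Matrix.toEuclideanLin Q '' C0 = C0

/-- Membership in the tetrahedral group `𝒫₄`: rotations preserving the tetrahedron `T₀`. -/
def memP4 (Q : Matrix (Fin 3) (Fin 3) ℝ) : Prop :=
  Q ∈ Matrix.specialOrthogonalGroup (Fin 3) ℝ ∧ Matrix.toEuclideanLin Q '' T0 = T0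

def fmap (c : ℝ) (P : Matrix (Fin 3) (Fin 3) ℝ) (i : Fin 4) (x : E3) : E3 :=
  c • Matrix.toEuclideanLin P x + vtx i

def IsAttractor (c : ℝ) (P : Matrix (Fin 3) (Fin 3) ℝ) (A : Set E3) : Prop :=
  A.Nonempty ∧ IsCompact A ∧ A = ⋃ i : Fin 4, fmap c P i '' A

open Set Metric
open scoped NNReal ENNReal RealInnerProductSpace

/-!
For `0 < c < 1` and a rotation `P`, the maps `x ↦ c P x + vᵢ` are contractions, so an attractor
is unique (the Hutchinson operator contracts the Hausdorff distance) and equals the set of sums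
`∑ cᵏ Pᵏ v_{σ k}` over addresses `σ : ℕ → Fin 4`. Only the sets `Pᵏ V` enter here. A rotation of the
cube permutes its eight vertices `V ∪ V' = V ∪ -V` and preserves inner products; these are `3` or
`-1` inside `V` but `-3` or `1` between `V` and `-V`, so `P V = V` (then `P ∈ 𝒫₄`) or `P V = -V`.
Hence `A(c,P)` is `{∑ cᵏ uₖ | uₖ ∈ V}` or `{∑ (-c)ᵏ uₖ | uₖ ∈ V}`. The point `v₁/(1-c) = ∑ cᵏ v₁`
lies in the first set; pairing with `v₁` bounds the points of the second by `∑ 3cᵏ`, with a strict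
loss at `k = 1`, so it is not there.
-/

section Hutchinson

lemma LipschitzWith.infEDist_image_le {X Y : Type*} [PseudoEMetricSpace X] [PseudoEMetricSpace Y]
    {K : ℝ≥0} {f : X → Y} (hf : LipschitzWith K f) (hK : K ≠ 0) (x : X) (t : Set X) :
    infEDist (f x) (f '' t) ≤ K * infEDist x t := by
  have hK' : (K : ℝ≥0∞) ≠ 0 := by exact_mod_cast hK
  rw [mul_comm, ← ENNReal.div_le_iff_le_mul (.inl hK') (.inl ENNReal.coe_ne_top)]
  refine le_infEDist.mpr fun y hy => ?_
  rw [ENNReal.div_le_iff_le_mul (.inl hK') (.inl ENNReal.coe_ne_top), mul_comm]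
  exact (infEDist_le_edist_of_mem (mem_image_of_mem f hy)).trans (hf x y)

lemma hausdorffEDist_iUnion_image_le {X ι : Type*} [PseudoEMetricSpace X] {K : ℝ≥0}
    {f : ι → X → X} (hf : ∀ i, LipschitzWith K (f i)) (hK : K ≠ 0) (s t : Set X) :
    hausdorffEDist (⋃ i, f i '' s) (⋃ i, f i '' t) ≤ K * hausdorffEDist s t := by
  have key : ∀ s t : Set X, ∀ x ∈ ⋃ i, f i '' s,
      infEDist x (⋃ i, f i '' t) ≤ K * hausdorffEDist s t := by
    intro s t x hx
    obtain ⟨i, a, ha, rfl⟩ := mem_iUnion.mp hx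
    calc infEDist (f i a) (⋃ i, f i '' t) ≤ infEDist (f i a) (f i '' t) :=
          infEDist_anti (subset_iUnion (fun i => f i '' t) i)
      _ ≤ K * infEDist a t := (hf i).infEDist_image_le hK a t
      _ ≤ K * hausdorffEDist s t := by gcongr; exact infEDist_le_hausdorffEDist_of_mem ha
  refine hausdorffEDist_le_of_infEDist (key s t) fun x hx => ?_
  rw [hausdorffEDist_comm]
  exact key t s x hx

theorem eq_of_eq_iUnion_image_of_lipschitzWith {X ι : Type*} [MetricSpace X] {K : ℝ≥0}
    {f : ι → X → X} (hf : ∀ i, LipschitzWith K (f i)) (hK0 : K ≠ 0) (hK1 : K < 1) {A B : Set X}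
    (hAne : A.Nonempty) (hA : IsCompact A) (hAf : A = ⋃ i, f i '' A)
    (hBne : B.Nonempty) (hB : IsCompact B) (hBf : B = ⋃ i, f i '' B) : A = B := by
  have hfin : hausdorffEDist A B ≠ ⊤ :=
    hausdorffEDist_ne_top_of_nonempty_of_bounded hAne hBne hA.isBounded hB.isBounded
  have hle : hausdorffEDist A B ≤ K * hausdorffEDist A B := by
    conv_lhs => rw [hAf, hBf]
    exact hausdorffEDist_iUnion_image_le hf hK0 A B
  have hzero : hausdorffEDist A B = 0 := by
    by_contra hne
    have := ENNReal.mul_lt_mul_right hne hfin (by exact_mod_cast hK1 : (K : ℝ≥0∞) < 1)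
    rw [mul_one, mul_comm] at this
    exact this.not_ge hle
  exact (hA.isClosed.hausdorffEDist_zero_iff hB.isClosed).mp hzero

end Hutchinson

section CodingMap

variable {E : Type*} [NormedAddCommGroup E] [NormedSpace ℝ E] {ι : Type*}

/-- The point with address `σ` of the attractor of the maps `fᵢ x = c • L x + v i`, that is
`lim f_{σ 0} ∘ ⋯ ∘ f_{σ n}`. -/
def codingMap (c : ℝ) (L : E →L[ℝ] E) (v : ι → E) (σ : ℕ → ι) : E :=
  ∑' k, c ^ k • (L ^ k) (v (σ k))

variable {c : ℝ} {L : E →L[ℝ] E} {v : ι → E}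

lemma norm_pow_apply_le (hL : ∀ x, ‖L x‖ ≤ ‖x‖) (k : ℕ) (x : E) : ‖(L ^ k) x‖ ≤ ‖x‖ := by
  induction k with
  | zero => simp
  | succ k ih => rw [pow_succ']; exact (hL _).trans ih

lemma norm_codingMap_summand_le (hc : 0 ≤ c) (hL : ∀ x, ‖L x‖ ≤ ‖x‖) {M : ℝ} (hM : ∀ i, ‖v i‖ ≤ M)
    (k : ℕ) (i : ι) : ‖c ^ k • (L ^ k) (v i)‖ ≤ c ^ k * M := by
  rw [norm_smul, Real.norm_of_nonneg (pow_nonneg hc k)]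
  gcongr
  exact (norm_pow_apply_le hL k _).trans (hM i)

lemma lipschitzWith_affine (hc : 0 ≤ c) (hL : ∀ x, ‖L x‖ ≤ ‖x‖) (w : E) :
    LipschitzWith (Real.toNNReal c) fun x => c • L x + w := by
  refine LipschitzWith.of_dist_le_mul fun x y => ?_
  rw [dist_add_right, dist_eq_norm, dist_eq_norm, ← smul_sub, ← map_sub, norm_smul,
    Real.norm_of_nonneg hc, Real.coe_toNNReal c hc]
  gcongr
  exact hL _

lemma pow_image_eq_of_commute {M : E →L[ℝ] E} (hLM : Commute L M)
    {s : Set E} (h : L '' s = M '' s) (k : ℕ) : ⇑(L ^ k) '' s = ⇑(M ^ k) '' s := by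
  induction k with
  | zero => rfl
  | succ k ih =>
    calc ⇑(L ^ (k + 1)) '' s = ⇑(L ^ k) '' (M '' s) := by rw [pow_succ, ← h, image_image]; rfl
      _ = M '' (⇑(L ^ k) '' s) := by
          rw [image_image, image_image]
          exact image_congr fun x _ => DFunLike.congr_fun (hLM.pow_left k).eq x
      _ = ⇑(M ^ (k + 1)) '' s := by rw [ih, pow_succ', image_image]; rfl

lemma range_codingMap_eq_of_pow_image {M : E →L[ℝ] E}
    (h : ∀ k, ⇑(L ^ k) '' range v = ⇑(M ^ k) '' range v) :
    range (codingMap c L v) = range (codingMap c M v) := by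
  suffices key : ∀ L M : E →L[ℝ] E, (∀ k, ⇑(L ^ k) '' range v = ⇑(M ^ k) '' range v) →
      range (codingMap c L v) ⊆ range (codingMap c M v) from
    (key L M h).antisymm (key M L fun k => (h k).symm)
  rintro L M h _ ⟨σ, rfl⟩
  have hmem : ∀ k, ∃ j, (M ^ k) (v j) = (L ^ k) (v (σ k)) := fun k => by
    obtain ⟨_, ⟨j, rfl⟩, hj⟩ : (L ^ k) (v (σ k)) ∈ ⇑(M ^ k) '' range v :=
      h k ▸ mem_image_of_mem _ (mem_range_self _)
    exact ⟨j, hj⟩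
  choose τ hτ using hmem
  exact ⟨τ, tsum_congr fun k => by rw [hτ]⟩

variable [CompleteSpace E]

lemma summable_codingMap_summand (hc0 : 0 ≤ c) (hc1 : c < 1) (hL : ∀ x, ‖L x‖ ≤ ‖x‖) [Finite ι]
    (σ : ℕ → ι) : Summable fun k => c ^ k • (L ^ k) (v (σ k)) := by
  obtain ⟨M, hM⟩ := (finite_range v).isBounded.exists_norm_le
  exact .of_norm_bounded ((summable_geometric_of_lt_one hc0 hc1).mul_right M)
    fun k => norm_codingMap_summand_le hc0 hL (fun i => hM _ (mem_range_self i)) k (σ k)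

lemma continuous_codingMap (hc0 : 0 ≤ c) (hc1 : c < 1) (hL : ∀ x, ‖L x‖ ≤ ‖x‖) [Finite ι]
    [TopologicalSpace ι] [DiscreteTopology ι] : Continuous (codingMap c L v) := by
  obtain ⟨M, hM⟩ := (finite_range v).isBounded.exists_norm_le
  refine continuous_tsum (fun k => ?_) ((summable_geometric_of_lt_one hc0 hc1).mul_right M)
    fun k σ => norm_codingMap_summand_le hc0 hL (fun i => hM _ (mem_range_self i)) k (σ k)
  exact (continuous_of_discreteTopology (f := fun i => c ^ k • (L ^ k) (v i))).comp
    (continuous_apply k)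

lemma codingMap_eq_smul_add (hc0 : 0 ≤ c) (hc1 : c < 1) (hL : ∀ x, ‖L x‖ ≤ ‖x‖) [Finite ι]
    (σ : ℕ → ι) : codingMap c L v σ = c • L (codingMap c L v (fun k => σ (k + 1))) + v (σ 0) := by
  have hmap := (c • L).map_tsum (summable_codingMap_summand hc0 hc1 hL (v := v) fun k => σ (k + 1))
  rw [FunLike.coe_smul, Pi.smul_apply] at hmap
  rw [codingMap, (summable_codingMap_summand hc0 hc1 hL σ).tsum_eq_zero_add, add_comm, codingMap,
    hmap]
  congr 1
  · refine tsum_congr fun k => ?_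
    simp only [Pi.smul_apply, map_smul, smul_smul, pow_succ', mul_comm c]
    rfl
  · simp

lemma range_codingMap_eq_iUnion (hc0 : 0 ≤ c) (hc1 : c < 1) (hL : ∀ x, ‖L x‖ ≤ ‖x‖) [Finite ι] :
    range (codingMap c L v) = ⋃ i, (fun x => c • L x + v i) '' range (codingMap c L v) := by
  ext x
  simp only [mem_iUnion, mem_image, mem_range, exists_exists_eq_and]
  constructor
  · rintro ⟨σ, rfl⟩
    exact ⟨σ 0, _, (codingMap_eq_smul_add hc0 hc1 hL σ).symm⟩
  · rintro ⟨i, σ, rfl⟩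
    exact ⟨fun k => Nat.casesOn k i σ, codingMap_eq_smul_add hc0 hc1 hL _⟩

theorem eq_range_codingMap_iff (hc0 : 0 < c) (hc1 : c < 1) (hL : ∀ x, ‖L x‖ ≤ ‖x‖) [Finite ι]
    [Nonempty ι] [TopologicalSpace ι] [DiscreteTopology ι] {A : Set E} :
    (A.Nonempty ∧ IsCompact A ∧ A = ⋃ i, (fun x => c • L x + v i) '' A) ↔
      A = range (codingMap c L v) := by
  have hinv := range_codingMap_eq_iUnion (v := v) hc0.le hc1 hL
  have hcpt := isCompact_range (continuous_codingMap (v := v) hc0.le hc1 hL)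
  constructor
  · rintro ⟨hAne, hA, hAf⟩
    exact eq_of_eq_iUnion_image_of_lipschitzWith (fun i => lipschitzWith_affine hc0.le hL (v i))
      (by simpa using hc0) (by simpa using hc1) hAne hA hAf (range_nonempty _) hcpt hinv
  · rintro rfl
    exact ⟨range_nonempty _, hcpt, hinv⟩

end CodingMap

section Geometry

variable {E : Type*} [NormedAddCommGroup E]

lemma convexHull_inter_sphere_eq [NormedSpace ℝ E] [StrictConvexSpace ℝ E] {s : Set E} {r : ℝ}
    (hr : r ≠ 0) (hs : s ⊆ sphere 0 r) : convexHull ℝ s ∩ sphere 0 r = s := by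
  refine subset_antisymm (fun x ⟨hx, hxr⟩ => ?_) fun x hx => ⟨subset_convexHull ℝ s hx, hs hx⟩
  have hsub : convexHull ℝ s ⊆ closedBall 0 r :=
    convexHull_min (hs.trans sphere_subset_closedBall) (convex_closedBall 0 r)
  exact extremePoints_convexHull_subset (inter_extremePoints_subset_extremePoints_of_subset hsub
    ⟨hx, StrictConvexSpace.sphere_subset_extremePoints_closedBall 0 hr hxr⟩)

lemma image_inter_sphere {f : E → E} (hf : ∀ x, ‖f x‖ = ‖x‖) (s : Set E) (r : ℝ) :
    f '' (s ∩ sphere 0 r) = f '' s ∩ sphere 0 r := by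
  rw [← image_inter_preimage]
  congr 2
  ext x
  simp [hf]

variable [InnerProductSpace ℝ E]

/-- `hV` says that no inner product of two points of `V` is minus another one, so an
inner-product-preserving `f` with `f v₀ ∈ V` cannot move any point of `V` into `-V`. -/
lemma image_eq_self_of_inner_add_ne_zero {V : Set E}
    (hV : ∀ x ∈ V, ∀ y ∈ V, ∀ z ∈ V, ∀ w ∈ V, ⟪x, y⟫ + ⟪z, w⟫ ≠ 0) {f : E →L[ℝ] E}
    (hf : ∀ x y, ⟪f x, f y⟫ = ⟪x, y⟫) (hW : f '' (V ∪ -V) = V ∪ -V) {v₀ : E} (hv₀ : v₀ ∈ V)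
    (hfv₀ : f v₀ ∈ V) : f '' V = V := by
  have hfV : ∀ x ∈ V, -f x ∉ V := fun x hx hneg => hV _ hneg _ hfv₀ _ hx _ hv₀ <| by
    rw [inner_neg_left, hf]; ring
  have hmem : ∀ x ∈ V ∪ -V, f x ∈ V ∪ -V := fun x hx => hW ▸ mem_image_of_mem f hx
  refine subset_antisymm ?_ fun y hy => ?_
  · rintro _ ⟨x, hx, rfl⟩
    exact (hmem x (.inl hx)).resolve_right (hfV x hx)
  · obtain ⟨x, hx | hx, rfl⟩ : y ∈ f '' (V ∪ -V) := by rw [hW]; exact .inl hy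
    · exact mem_image_of_mem f hx
    · exact absurd (by simpa using hy) (hfV _ hx)

lemma image_eq_or_image_eq_neg_of_inner_add_ne_zero {V : Set E} (hVne : V.Nonempty)
    (hV : ∀ x ∈ V, ∀ y ∈ V, ∀ z ∈ V, ∀ w ∈ V, ⟪x, y⟫ + ⟪z, w⟫ ≠ 0) {f : E →L[ℝ] E}
    (hf : ∀ x y, ⟪f x, f y⟫ = ⟪x, y⟫) (hW : f '' (V ∪ -V) = V ∪ -V) :
    f '' V = V ∨ f '' V = -V := by
  obtain ⟨v₀, hv₀⟩ := hVne
  rcases hW.symm ▸ mem_image_of_mem f (Or.inl hv₀ : v₀ ∈ V ∪ -V) with h | h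
  · exact .inl (image_eq_self_of_inner_add_ne_zero hV hf hW hv₀ h)
  · have image_neg : ∀ s : Set E, ⇑(-f) '' s = -(f '' s) := fun s => by
      rw [← image_neg_eq_neg, image_image]; rfl
    have hnegW : ⇑(-f) '' (V ∪ -V) = V ∪ -V := by rw [image_neg, hW, union_neg, neg_neg, union_comm]
    refine .inr (neg_eq_iff_eq_neg.mp ?_)
    rw [← image_neg]
    exact image_eq_self_of_inner_add_ne_zero hV (by simpa using hf) hnegW hv₀ (by simpa using h)

end Geometry

section Cube

lemma inner_vtx (i j : Fin 4) : ⟪vtx i, vtx j⟫ = if i = j then 3 else -1 := by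
  fin_cases i <;> fin_cases j <;>
    simp [vtx, PiLp.inner_apply, Fin.sum_univ_three, EuclideanSpace.norm_sq_eq] <;> norm_num

lemma norm_vtx (i : Fin 4) : ‖vtx i‖ = √3 := by
  rw [norm_eq_sqrt_real_inner, inner_vtx, if_pos rfl]

lemma inner_vtx_add_ne_zero : ∀ x ∈ range vtx, ∀ y ∈ range vtx, ∀ z ∈ range vtx,
    ∀ w ∈ range vtx, ⟪x, y⟫ + ⟪z, w⟫ ≠ 0 := by
  rintro _ ⟨i, rfl⟩ _ ⟨j, rfl⟩ _ ⟨k, rfl⟩ _ ⟨l, rfl⟩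
  simp only [inner_vtx]
  split_ifs <;> norm_num

lemma T0_inter_sphere : T0 ∩ sphere 0 √3 = range vtx :=
  convexHull_inter_sphere_eq (by positivity) (range_subset_iff.mpr fun i => by simp [norm_vtx])

lemma C0_inter_sphere : C0 ∩ sphere 0 √3 = range vtx ∪ -range vtx := by
  apply subset_antisymm
  · rintro x ⟨hC, hx⟩
    have hsq : x 0 ^ 2 + x 1 ^ 2 + x 2 ^ 2 = 3 := by
      have := congrArg (· ^ 2) (mem_sphere_zero_iff_norm.mp hx)
      simpa [EuclideanSpace.norm_sq_eq, Fin.sum_univ_three, add_assoc] using this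
    have h0 := hC 0; have h1 := hC 1; have h2 := hC 2
    simp only [mem_Icc] at h0 h1 h2
    have hsign : ∀ i, x i ^ 2 = 1 := fun i => by
      fin_cases i <;> dsimp <;> nlinarith
    simp only [sq_eq_one_iff] at hsign
    have hx : x = !₂[x 0, x 1, x 2] := by ext i; fin_cases i <;> rfl
    rw [hx]
    rcases hsign 0 with h0 | h0 <;> rcases hsign 1 with h1 | h1 <;> rcases hsign 2 with h2 | h2 <;>
      rw [h0, h1, h2] <;> simp [vtx, ← WithLp.toLp_neg, Matrix.neg_cons, Matrix.neg_empty]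
  · rintro x (⟨i, rfl⟩ | ⟨i, hi⟩)
    · refine ⟨fun j => ?_, by simp [norm_vtx]⟩
      fin_cases i <;> fin_cases j <;> simp [vtx]
    · rw [← neg_neg x, ← hi]
      refine ⟨fun j => ?_, by simp [norm_vtx]⟩
      fin_cases i <;> fin_cases j <;> simp [vtx]

end Cube

section Orthogonal

variable {n : Type*} [Fintype n] [DecidableEq n]

lemma coe_toEuclideanCLM (P : Matrix n n ℝ) :
    ⇑(toEuclideanCLM (𝕜 := ℝ) P) = ⇑(toEuclideanLin P) :=
  rfl

lemma toEuclideanCLM_mem_unitary {P : Matrix n n ℝ} (hP : P ∈ orthogonalGroup n ℝ) :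
    toEuclideanCLM (𝕜 := ℝ) P ∈ unitary (EuclideanSpace ℝ n →L[ℝ] EuclideanSpace ℝ n) :=
  Unitary.map_mem _ hP

end Orthogonal

section Rotations

variable {c : ℝ} {P : Matrix (Fin 3) (Fin 3) ℝ} {A : Set E3}

lemma image_vtx_of_memP4 (h4 : memP4 P) : toEuclideanCLM (𝕜 := ℝ) P '' range vtx = range vtx := by
  rw [← T0_inter_sphere, image_inter_sphere
    (ContinuousLinearMap.norm_map_of_mem_unitary (toEuclideanCLM_mem_unitary h4.1.1)),
    coe_toEuclideanCLM, h4.2]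

lemma image_vtx_of_memP6_of_not_memP4 (h6 : memP6 P) (h4 : ¬ memP4 P) :
    toEuclideanCLM (𝕜 := ℝ) P '' range vtx = -range vtx := by
  have hU := toEuclideanCLM_mem_unitary h6.1.1
  have hW : toEuclideanCLM (𝕜 := ℝ) P '' (range vtx ∪ -range vtx) = range vtx ∪ -range vtx := by
    rw [← C0_inter_sphere, image_inter_sphere (ContinuousLinearMap.norm_map_of_mem_unitary hU),
      coe_toEuclideanCLM, h6.2]
  refine (image_eq_or_image_eq_neg_of_inner_add_ne_zero (range_nonempty vtx) inner_vtx_add_ne_zero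
    (ContinuousLinearMap.inner_map_map_of_mem_unitary hU) hW).resolve_left fun hV => h4 ⟨h6.1, ?_⟩
  rw [T0, LinearMap.image_convexHull, ← coe_toEuclideanCLM, hV]

lemma isAttractor_iff_eq_range_codingMap (hc : c ∈ Ioo 0 1)
    (hP : P ∈ orthogonalGroup (Fin 3) ℝ) :
    IsAttractor c P A ↔ A = range (codingMap c (toEuclideanCLM (𝕜 := ℝ) P) vtx) := by
  unfold IsAttractor fmap
  rw [← coe_toEuclideanCLM]
  exact eq_range_codingMap_iff hc.1 hc.2
    fun x => (ContinuousLinearMap.norm_map_of_mem_unitary (toEuclideanCLM_mem_unitary hP) x).le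

lemma isAttractor_iff_of_memP4 (hc : c ∈ Ioo 0 1) (h4 : memP4 P) :
    IsAttractor c P A ↔ A = range (codingMap c 1 vtx) := by
  rw [isAttractor_iff_eq_range_codingMap hc h4.1.1,
    range_codingMap_eq_of_pow_image (pow_image_eq_of_commute (Commute.one_right _) _)]
  simpa using image_vtx_of_memP4 h4

lemma isAttractor_iff_of_memP6_of_not_memP4 (hc : c ∈ Ioo 0 1) (h6 : memP6 P) (h4 : ¬ memP4 P) :
    IsAttractor c P A ↔ A = range (codingMap c (-1) vtx) := by
  rw [isAttractor_iff_eq_range_codingMap hc h6.1.1,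
    range_codingMap_eq_of_pow_image (pow_image_eq_of_commute (Commute.neg_one_right _) _)]
  simpa using image_vtx_of_memP6_of_not_memP4 h6 h4

lemma codingMap_one_const_zero (hc : c ∈ Ioo 0 1) :
    codingMap c 1 vtx (fun _ => 0) = (1 - c)⁻¹ • vtx 0 := by
  simp [codingMap, (summable_geometric_of_lt_one hc.1.le hc.2).tsum_smul_const,
    tsum_geometric_of_lt_one hc.1.le hc.2]

lemma notMem_range_codingMap_neg_one (hc : c ∈ Ioo 0 1) :
    (1 - c)⁻¹ • vtx 0 ∉ range (codingMap c (-1) vtx) := by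
  rintro ⟨σ, hσ⟩
  have hneg : ∀ k (x : E3), ((-1 : E3 →L[ℝ] E3) ^ k) x = (-1 : ℝ) ^ k • x := fun k x => by
    induction k with
    | zero => simp
    | succ k ih => simp [pow_succ', ih]
  have hinner : HasSum (fun k => c ^ k * ((-1) ^ k * ⟪vtx 0, vtx (σ k)⟫)) ((1 - c)⁻¹ * 3) := by
    have := (summable_codingMap_summand hc.1.le hc.2 (L := -1) (v := vtx) (fun x => by simp)
      σ).hasSum.mapL (innerSL ℝ (vtx 0))
    rw [← codingMap, hσ] at this
    simpa [hneg, inner_smul_right, norm_vtx] using this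
  have hgeo : HasSum (fun k => c ^ k * 3) ((1 - c)⁻¹ * 3) :=
    (hasSum_geometric_of_lt_one hc.1.le hc.2).mul_right 3
  refine (hasSum_lt (i := 1) (fun k => ?_) ?_ hinner hgeo).false
  · refine mul_le_mul_of_nonneg_left ?_ (pow_nonneg hc.1.le k)
    rcases neg_one_pow_eq_or ℝ k with h | h <;> rw [h, inner_vtx] <;> split_ifs <;> norm_num
  · rw [pow_one, pow_one, inner_vtx]
    split_ifs <;> nlinarith [hc.1]

end Rotations

section Examples

lemma memP4_one : memP4 1 :=
  ⟨one_mem _, by rw [← coe_toEuclideanCLM, map_one]; simp⟩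

lemma memP6_one : memP6 1 :=
  ⟨one_mem _, by rw [← coe_toEuclideanCLM, map_one]; simp⟩

/-- The half-turn about the axis `(1, 1, 0)`. -/
def edgeFlip : Matrix (Fin 3) (Fin 3) ℝ := !![0, 1, 0; 1, 0, 0; 0, 0, -1]

lemma toEuclideanLin_edgeFlip (x : E3) : toEuclideanLin edgeFlip x = !₂[x 1, x 0, -x 2] := by
  ext i
  fin_cases i <;> simp [edgeFlip, mulVec, dotProduct, Fin.sum_univ_three]

lemma edgeFlip_mem_specialOrthogonalGroup : edgeFlip ∈ specialOrthogonalGroup (Fin 3) ℝ := by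
  rw [mem_specialOrthogonalGroup_iff, mem_orthogonalGroup_iff]
  refine ⟨?_, by simp [edgeFlip, det_fin_three]⟩
  ext i j
  fin_cases i <;> fin_cases j <;> simp [edgeFlip, mul_apply, Fin.sum_univ_three]

lemma memP6_edgeFlip : memP6 edgeFlip := by
  refine ⟨edgeFlip_mem_specialOrthogonalGroup, ?_⟩
  have hmaps : MapsTo (toEuclideanLin edgeFlip) C0 C0 := fun x hx i => by
    have h0 := hx 0; have h1 := hx 1; have h2 := hx 2
    simp only [mem_Icc] at h0 h1 h2 ⊢
    rw [toEuclideanLin_edgeFlip]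
    fin_cases i <;> simp <;> constructor <;> linarith
  refine hmaps.image_subset.antisymm fun x hx => ⟨_, hmaps hx, ?_⟩
  rw [toEuclideanLin_edgeFlip, toEuclideanLin_edgeFlip]
  ext i
  fin_cases i <;> simp

lemma not_memP4_edgeFlip : ¬ memP4 edgeFlip := by
  intro h4
  have : toEuclideanLin edgeFlip (vtx 0) ∈ range vtx := by
    rw [← coe_toEuclideanCLM, ← image_vtx_of_memP4 h4]
    exact mem_image_of_mem _ (mem_range_self 0)
  rw [toEuclideanLin_edgeFlip] at this
  simp [vtx] at this
  norm_num at this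

end Examples

theorem two_attractors (c : ℝ) (hc : c ∈ Set.Ioo (0 : ℝ) 1) :
    (∀ P₁ P₂ : Matrix (Fin 3) (Fin 3) ℝ, memP4 P₁ → memP6 P₂ → ¬ memP4 P₂ →
      ∀ T O : Set E3, IsAttractor c P₁ T → IsAttractor c P₂ O →
        (1 - c)⁻¹ • vtx 0 ∈ T ∧ (1 - c)⁻¹ • vtx 0 ∉ O ∧ T ≠ O) ∧
    {A : Set E3 | ∃ P : Matrix (Fin 3) (Fin 3) ℝ, memP6 P ∧ IsAttractor c P A}.ncard = 2 := by
  have hmem : (1 - c)⁻¹ • vtx 0 ∈ range (codingMap c 1 vtx) := ⟨_, codingMap_one_const_zero hc⟩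
  have hnot := notMem_range_codingMap_neg_one hc
  have hne : range (codingMap c 1 vtx) ≠ range (codingMap c (-1) vtx) := fun h => hnot (h ▸ hmem)
  refine ⟨fun P₁ P₂ h₁ h₆ h₄ T O hT hO => ?_, ?_⟩
  · rw [(isAttractor_iff_of_memP4 hc h₁).mp hT,
      (isAttractor_iff_of_memP6_of_not_memP4 hc h₆ h₄).mp hO]
    exact ⟨hmem, hnot, hne⟩
  · suffices {A : Set E3 | ∃ P, memP6 P ∧ IsAttractor c P A} =
        {range (codingMap c 1 vtx), range (codingMap c (-1) vtx)} by
      rw [this, ncard_pair hne]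
    ext A
    constructor
    · rintro ⟨P, h₆, hA⟩
      by_cases h₄ : memP4 P
      · exact .inl ((isAttractor_iff_of_memP4 hc h₄).mp hA)
      · exact .inr ((isAttractor_iff_of_memP6_of_not_memP4 hc h₆ h₄).mp hA)
    · rintro (rfl | rfl)
      · exact ⟨1, memP6_one, (isAttractor_iff_of_memP4 hc memP4_one).mpr rfl⟩
      · exact ⟨edgeFlip, memP6_edgeFlip,
          (isAttractor_iff_of_memP6_of_not_memP4 hc memP6_edgeFlip not_memP4_edgeFlip).mpr rfl⟩
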